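/- Let p be a prime and let R be a Noetherian commutative ring of characteristic p which is a Jacobson ring. Then R is semi F-regular if and only if R is weakly F-regular; that is, every ideal of R_f is tightly closed for every f ∈ R if and only if every ideal of R is tightly closed. -/

import Mathlib

/-- `offMinimal S` is `S°`, the set of elements of `S` lying outside every minimal prime. -/
def offMinimal (S : Type*) [CommRing S] : Set S :=
  {c : S | ∀ P ∈ minimalPrimes S, c ∉ P}

/-- The bracket power `J^[q]`, generated by `q`-th powers of elements of `J`. -/
def bracketPow {S : Type*} [CommRing S] (J : Ideal S) (q : ℕ) : Ideal S :=
  Ideal.span ((fun a => a ^ q) '' (J : Set S))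

/-- The tight closure `J^*` of an ideal `J` in a ring of characteristic `p`. -/
def tightClosure (p : ℕ) {S : Type*} [CommRing S] (J : Ideal S) : Set S :=
  {z : S | ∃ c ∈ offMinimal S, ∃ e₀ : ℕ, ∀ e : ℕ, e₀ ≤ e →
    c * z ^ p ^ e ∈ bracketPow J (p ^ e)}

/-- A ring `S` is weakly F-regular (with respect to `p`) if every ideal is tightly closed. -/
def WeaklyFRegular (p : ℕ) (S : Type*) [CommRing S] : Prop :=
  ∀ J : Ideal S, tightClosure p J = (J : Set S)

/-- A ring `S` is semi F-regular (with respect to `p`) if for every `f ∈ S` the localization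
`S_f` is weakly F-regular. -/
def SemiFRegular (p : ℕ) (S : Type*) [CommRing S] : Prop :=
  ∀ f : S, WeaklyFRegular p (Localization.Away f)

/-!
Taking `f = 1` gives one direction. Conversely, in a Noetherian ring Krull's intersection
theorem reduces weak F-regularity to ideals `I` whose radical is maximal. For such an ideal of
`R_f`, the Jacobson property makes the contraction `m` of `√I` maximal in `R` with `f ∉ m`, so
the bracket powers of the contraction `I₀` of `I` are `m`-primary and therefore contracted
from `R_f`. A test element of `R_f°` may be replaced, up to a unit and a power, by the image
of an element of `R°` (prime avoidance over the finitely many minimal primes of `R`); hence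
`z/s ∈ I^*` forces `z ∈ I₀^* = I₀`.
-/

section TightClosure

variable {R : Type*} [CommRing R]

theorem IsUnit.mem_offMinimal {u : R} (hu : IsUnit u) : u ∈ offMinimal R :=
  fun P hP huP => hP.1.1.ne_top (P.eq_top_of_isUnit_mem huP hu)

theorem mul_mem_offMinimal {a b : R} (ha : a ∈ offMinimal R) (hb : b ∈ offMinimal R) :
    a * b ∈ offMinimal R :=
  fun P hP hab => (hP.1.1.mem_or_mem hab).elim (ha P hP) (hb P hP)

theorem pow_mem_bracketPow {J : Ideal R} {a : R} (ha : a ∈ J) (q : ℕ) :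
    a ^ q ∈ bracketPow J q :=
  Ideal.subset_span ⟨a, ha, rfl⟩

theorem radical_bracketPow (J : Ideal R) {q : ℕ} (hq : 0 < q) :
    (bracketPow J q).radical = J.radical := by
  refine le_antisymm (Ideal.radical_mono <| Ideal.span_le.mpr ?_) ?_
  · rintro _ ⟨a, ha, rfl⟩
    exact J.pow_mem_of_mem ha q hq
  · exact Ideal.radical_le_radical_iff.mpr fun a ha =>
      Ideal.mem_radical_of_pow_mem (Ideal.le_radical (pow_mem_bracketPow ha q))

theorem map_bracketPow_le {S : Type*} [CommRing S] (φ : R →+* S) (J : Ideal R) (q : ℕ) :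
    (bracketPow J q).map φ ≤ bracketPow (J.map φ) q := by
  rw [bracketPow, Ideal.map_span]
  refine Ideal.span_le.mpr ?_
  rintro _ ⟨_, ⟨a, ha, rfl⟩, rfl⟩
  rw [map_pow]
  exact pow_mem_bracketPow (Ideal.mem_map_of_mem φ ha) q

theorem subset_tightClosure (p : ℕ) (J : Ideal R) : (J : Set R) ⊆ tightClosure p J :=
  fun z hz => ⟨1, isUnit_one.mem_offMinimal, 0, fun e _ => by
    rw [one_mul]
    exact pow_mem_bracketPow hz _⟩

theorem mul_mem_tightClosure (p : ℕ) {J : Ideal R} (a : R) {z : R}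
    (hz : z ∈ tightClosure p J) : a * z ∈ tightClosure p J := by
  obtain ⟨c, hc, e₀, hce⟩ := hz
  refine ⟨c, hc, e₀, fun e he => ?_⟩
  convert (bracketPow J (p ^ e)).mul_mem_left (a ^ p ^ e) (hce e he) using 1
  ring

theorem tightClosure_mono (p : ℕ) {J J' : Ideal R} (h : J ≤ J') :
    tightClosure p J ⊆ tightClosure p J' :=
  fun _ ⟨c, hc, e₀, hce⟩ =>
    ⟨c, hc, e₀, fun e he => Ideal.span_mono (Set.image_mono h) (hce e he)⟩

theorem map_mem_tightClosure_map {S : Type*} [CommRing S] (p : ℕ) {φ : R →+* S}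
    (hφ : ∀ c ∈ offMinimal R, φ c ∈ offMinimal S) {J : Ideal R} {z : R}
    (hz : z ∈ tightClosure p J) : φ z ∈ tightClosure p (J.map φ) := by
  obtain ⟨c, hc, e₀, hce⟩ := hz
  refine ⟨φ c, hφ c hc, e₀, fun e he => map_bracketPow_le φ J _ ?_⟩
  rw [← map_pow, ← map_mul]
  exact Ideal.mem_map_of_mem φ (hce e he)

theorem RingEquiv.map_mem_offMinimal {S : Type*} [CommRing S] (σ : R ≃+* S) {c : R}
    (hc : c ∈ offMinimal R) : σ c ∈ offMinimal S := by
  intro P hP hcP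
  have hmin :=
    Ideal.minimalPrimes_comap_of_surjective (f := (σ : R →+* S)) σ.surjective (I := ⊥) hP
  rw [Ideal.comap_bot_of_injective (σ : R →+* S) σ.injective] at hmin
  exact hc _ hmin hcP

theorem WeaklyFRegular.of_ringEquiv {S : Type*} [CommRing S] {p : ℕ} (σ : R ≃+* S)
    (h : WeaklyFRegular p S) : WeaklyFRegular p R := by
  refine fun J => (Set.Subset.antisymm (fun z hz => ?_) (subset_tightClosure p J))
  have hσz :=
    map_mem_tightClosure_map p (φ := (σ : R →+* S)) (fun _ => σ.map_mem_offMinimal) hz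
  rw [h] at hσz
  exact Ideal.apply_mem_of_equiv_iff.mp hσz

end TightClosure

section Noetherian

variable {R : Type*} [CommRing R] [IsNoetherianRing R]

theorem Ideal.mem_of_forall_mem_sup_pow {J : Ideal R} {x : R}
    (hx : ∀ m : Ideal R, m.IsMaximal → ∀ n : ℕ, x ∈ J ⊔ m ^ n) : x ∈ J := by
  by_contra hxJ
  obtain ⟨m, hm, hcolon⟩ := Ideal.exists_le_maximal (J.colon {x}) (by
    rwa [Ne, Ideal.eq_top_iff_one, Submodule.mem_colon_singleton, one_smul])
  have hmk : Ideal.Quotient.mk J x ∈ ⨅ n : ℕ, m ^ n • (⊤ : Submodule R (R ⧸ J)) := by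
    refine Submodule.mem_iInf _ |>.mpr fun n => ?_
    obtain ⟨j, hj, y, hy, rfl⟩ := Submodule.mem_sup.mp (hx m hm n)
    rw [map_add, Ideal.Quotient.eq_zero_iff_mem.mpr hj, zero_add,
      show Ideal.Quotient.mk J y = y • 1 by rw [Algebra.smul_def, mul_one]; rfl]
    exact Submodule.smul_mem_smul hy Submodule.mem_top
  obtain ⟨⟨r, hr⟩, hrx⟩ := (m.mem_iInf_smul_pow_eq_bot_iff _).mp hmk
  -- Krull: `r • x ≡ x` modulo `J` for some `r ∈ m`, so `1 - r` lies in `J : x ⊆ m`.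
  have h1r : 1 - r ∈ J.colon {x} := by
    rw [Submodule.mem_colon_singleton, sub_smul, one_smul, ← Ideal.Quotient.eq]
    rw [Algebra.smul_def, Ideal.Quotient.algebraMap_eq, ← map_mul] at hrx
    exact hrx.symm
  exact hm.ne_top (m.eq_top_iff_one.mpr (by simpa using m.add_mem (hcolon h1r) hr))

theorem weaklyFRegular_of_tightClosure_subset (p : ℕ)
    (h : ∀ I m : Ideal R, m.IsMaximal → m ≤ I.radical → tightClosure p I ⊆ I) :
    WeaklyFRegular p R := by
  refine fun J => Set.Subset.antisymm (fun z hz => ?_) (subset_tightClosure p J)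
  refine Ideal.mem_of_forall_mem_sup_pow fun m hm n => h _ m hm ?_ ?_
  · exact fun a ha => ⟨n, Ideal.mem_sup_right (Ideal.pow_mem_pow ha n)⟩
  · exact tightClosure_mono p le_sup_left hz

theorem exists_add_mem_offMinimal (c : R) :
    ∃ t, (∀ P ∈ minimalPrimes R, c ∉ P → t ∈ P) ∧ c + t ∈ offMinimal R := by
  have hfin := minimalPrimes.finite_of_isNoetherianRing R
  have hB : {P ∈ minimalPrimes R | c ∉ P}.Finite := hfin.subset fun _ h => h.1
  -- Minimal primes are pairwise incomparable, so the intersection of those avoiding `c`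
  -- is contained in none of those containing `c`; prime avoidance then yields `t`.
  have hW : ¬ ∃ P ∈ {P ∈ minimalPrimes R | c ∈ P}, hB.toFinset.inf id ≤ P := by
    rintro ⟨P, ⟨hP, hcP⟩, hWP⟩
    obtain ⟨Q, hQ, hQP⟩ := hP.1.1.inf_le'.mp hWP
    rw [Set.Finite.mem_toFinset] at hQ
    exact hQ.2 (hP.2 hQ.1.1 hQP hcP)
  obtain ⟨t, htW, htA⟩ := Set.not_subset.mp <| mt (Ideal.subset_union_prime_finite
    (hfin.subset fun _ h => h.1) ⊥ ⊥ (f := id) (fun P hP _ _ => hP.1.1.1)).mp hW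
  have htB : ∀ P ∈ minimalPrimes R, c ∉ P → t ∈ P := fun P hP hcP =>
    (Finset.inf_le (f := id) (hB.mem_toFinset.mpr ⟨hP, hcP⟩) : _ ≤ P) htW
  refine ⟨t, htB, fun P hP hctP => ?_⟩
  by_cases hcP : c ∈ P
  · exact htA (Set.mem_biUnion ⟨hP, hcP⟩ ((P.add_mem_iff_right hcP).mp hctP))
  · exact hcP ((P.add_mem_iff_left (htB P hP hcP)).mp hctP)

end Noetherian

section Localization

variable {R S : Type*} [CommRing R] [CommRing S] [Algebra R S]

theorem bracketPow_map_le_map_bracketPow (M : Submonoid R) [IsLocalization M S]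
    (J : Ideal R) (q : ℕ) :
    bracketPow (J.map (algebraMap R S)) q ≤ (bracketPow J q).map (algebraMap R S) := by
  refine Ideal.span_le.mpr ?_
  rintro _ ⟨z, hz, rfl⟩
  obtain ⟨⟨a, s⟩, hzs⟩ := (IsLocalization.mem_map_algebraMap_iff M S).mp hz
  have hzq : z ^ q * algebraMap R S ↑(s ^ q) = algebraMap R S (a ^ q) := by
    rw [SubmonoidClass.coe_pow, map_pow, map_pow, ← mul_pow, hzs]
  refine (Ideal.mul_unit_mem_iff_mem _ (IsLocalization.map_units S (s ^ q))).mp ?_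
  rw [hzq]
  exact Ideal.mem_map_of_mem _ (pow_mem_bracketPow a.2 q)

theorem notMem_of_algebraMap_mem_offMinimal (M : Submonoid R) [IsLocalization M S] {c : R}
    (hc : algebraMap R S c ∈ offMinimal S) {P : Ideal R} (hP : P ∈ minimalPrimes R)
    (hPM : Disjoint (M : Set R) P) : c ∉ P := by
  have hmin : P.map (algebraMap R S) ∈ minimalPrimes S := by
    have hmap := IsLocalization.minimalPrimes_map M S (⊥ : Ideal R)
    rw [Ideal.map_bot] at hmap
    change _ ∈ (⊥ : Ideal S).minimalPrimes
    rw [hmap, Set.mem_preimage,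
      IsLocalization.under_map_of_isPrime_disjoint M S hP.1.1 hPM]
    exact hP
  exact fun hcP => hc _ hmin (Ideal.mem_map_of_mem _ hcP)

theorem exists_mem_offMinimal_algebraMap_eq_pow [IsNoetherianRing R] {f : R}
    [IsLocalization.Away f S] {c : R} (hc : algebraMap R S c ∈ offMinimal S) :
    ∃ c₁ ∈ offMinimal R, ∃ k : ℕ, algebraMap R S c₁ = algebraMap R S c ^ (k + 1) := by
  obtain ⟨t, htP, hct⟩ := exists_add_mem_offMinimal c
  -- `f * t` lies in every minimal prime: those avoiding `f` avoid `c`, hence contain `t`.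
  have hft : IsNilpotent (f * t) := by
    rw [← mem_nilradical, nilradical, Ideal.zero_eq_bot, ← Ideal.sInf_minimalPrimes,
      Ideal.mem_sInf]
    intro P hP
    by_cases hfP : f ∈ P
    · exact P.mul_mem_right t hfP
    · have := hP.1.1
      have hdisj := (Ideal.disjoint_powers_iff_notMem_of_isPrime f).mpr hfP
      exact P.mul_mem_left f (htP P hP
        (notMem_of_algebraMap_mem_offMinimal (Submonoid.powers f) hc hP hdisj))
  obtain ⟨k, hk⟩ := hft
  refine ⟨c ^ (k + 1) + t ^ (k + 1), fun P hP hmem => ?_, k, ?_⟩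
  · have hPrime := hP.1.1
    by_cases hcP : c ∈ P
    · have htP' : t ∈ P :=
        hPrime.mem_of_pow_mem _ ((P.add_mem_iff_right (P.pow_mem_of_mem hcP _ k.succ_pos)).mp hmem)
      exact hct P hP (P.add_mem hcP htP')
    · exact hcP (hPrime.mem_of_pow_mem _
        ((P.add_mem_iff_left (P.pow_mem_of_mem (htP P hP hcP) _ k.succ_pos)).mp hmem))
  · have ht : algebraMap R S (t ^ (k + 1)) = 0 :=
      (IsLocalization.map_eq_zero_iff (Submonoid.powers f) S _).mpr
        ⟨⟨f ^ (k + 1), k + 1, rfl⟩, by rw [← mul_pow, pow_succ, hk, zero_mul]⟩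
    rw [map_add, ht, add_zero, map_pow]

theorem exists_mem_offMinimal_of_mem_tightClosure [IsNoetherianRing R] {p : ℕ} {f : R}
    [IsLocalization.Away f S] {J : Ideal S} {z : S} (hz : z ∈ tightClosure p J) :
    ∃ c ∈ offMinimal R, ∃ e₀ : ℕ, ∀ e : ℕ, e₀ ≤ e →
      algebraMap R S c * z ^ p ^ e ∈ bracketPow J (p ^ e) := by
  obtain ⟨c, hc, e₀, hce⟩ := hz
  obtain ⟨⟨c₀, s⟩, rfl⟩ := IsLocalization.mk'_surjective (Submonoid.powers f) c
  have hc₀ : algebraMap R S c₀ = IsLocalization.mk' S c₀ s * algebraMap R S s :=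
    (IsLocalization.mk'_spec S c₀ s).symm
  have hc₀S : algebraMap R S c₀ ∈ offMinimal S :=
    hc₀ ▸ mul_mem_offMinimal hc (IsLocalization.map_units S s).mem_offMinimal
  obtain ⟨c₁, hc₁, k, hk⟩ := exists_mem_offMinimal_algebraMap_eq_pow (f := f) hc₀S
  refine ⟨c₁, hc₁, e₀, fun e he => ?_⟩
  convert (bracketPow J (p ^ e)).mul_mem_left
    (algebraMap R S c₀ ^ k * algebraMap R S s) (hce e he) using 1
  rw [hk]
  linear_combination (algebraMap R S c₀ ^ k * z ^ p ^ e) * hc₀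

theorem mem_tightClosure_of_algebraMap_mem [IsNoetherianRing R] {p : ℕ} (hp : 0 < p) {f : R}
    [IsLocalization.Away f S] {I m : Ideal R} (hm : m.IsMaximal) (hfm : f ∉ m)
    (hmI : m ≤ I.radical) {z : R}
    (hz : algebraMap R S z ∈ tightClosure p (I.map (algebraMap R S))) :
    z ∈ tightClosure p I := by
  obtain ⟨c, hc, e₀, hce⟩ := exists_mem_offMinimal_of_mem_tightClosure (f := f) hz
  refine ⟨c, hc, e₀, fun e he => ?_⟩
  by_cases htop : bracketPow I (p ^ e) = ⊤
  · rw [htop]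
    trivial
  -- `I^[q]` is `m`-primary and `f ∉ m`, so it is contracted from `S`.
  have hrad : (bracketPow I (p ^ e)).radical = m := by
    rw [radical_bracketPow I (pow_pos hp e)]
    refine (hm.eq_of_le (fun h => htop ?_) hmI).symm
    exact Ideal.radical_eq_top.mp ((radical_bracketPow I (pow_pos hp e)).trans h)
  have hprimary := Ideal.isPrimary_of_isMaximal_radical (hrad ▸ hm)
  have hdisj : Disjoint (Submonoid.powers f : Set R) (bracketPow I (p ^ e)) :=
    ((Ideal.disjoint_powers_iff_notMem f (Ideal.radical_isRadical _)).mpr (hrad ▸ hfm)).mono_right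
      fun _ h => Ideal.le_radical h
  rw [← IsLocalization.under_map_of_isPrimary_disjoint (Submonoid.powers f) S hprimary hdisj]
  apply bracketPow_map_le_map_bracketPow (Submonoid.powers f)
  rw [map_mul, map_pow]
  exact hce e he

end Localization

theorem WeaklyFRegular.of_isLocalization_away {R : Type*} [CommRing R] [IsNoetherianRing R]
    [IsJacobsonRing R] {p : ℕ} (hp : 0 < p) (f : R) (S : Type*) [CommRing S] [Algebra R S]
    [IsLocalization.Away f S] (h : WeaklyFRegular p R) : WeaklyFRegular p S := by
  have : IsNoetherianRing S := IsLocalization.isNoetherianRing (Submonoid.powers f) S inferInstance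
  refine weaklyFRegular_of_tightClosure_subset p fun I m' hm' hm'I z hz => ?_
  obtain ⟨hm, hfm⟩ := (IsLocalization.isMaximal_iff_isMaximal_disjoint S f m').mp hm'
  obtain ⟨⟨z₀, s⟩, rfl⟩ := IsLocalization.mk'_surjective (Submonoid.powers f) z
  have hz₀ : algebraMap R S z₀ ∈ tightClosure p ((I.under R).map (algebraMap R S)) := by
    rw [IsLocalization.map_under (Submonoid.powers f), ← IsLocalization.mk'_spec S z₀ s,
      mul_comm]
    exact mul_mem_tightClosure p _ hz
  have hmI : m'.under R ≤ (I.under R).radical := by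
    rw [Ideal.under, Ideal.under, ← Ideal.comap_radical]
    exact Ideal.comap_mono hm'I
  have hz₀I := mem_tightClosure_of_algebraMap_mem hp hm hfm hmI hz₀
  rw [h] at hz₀I
  exact IsLocalization.mk'_mem_iff.mpr hz₀I

theorem semiFRegular_iff_weaklyFRegular_of_jacobson_general (p : ℕ) (hp : p.Prime)
    (R : Type*) [CommRing R] [IsNoetherianRing R] [IsJacobsonRing R] :
    SemiFRegular p R ↔ WeaklyFRegular p R :=
  ⟨fun h => (h 1).of_ringEquiv (IsLocalization.atOne R (Localization.Away (1 : R))).toRingEquiv,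
    fun h f => h.of_isLocalization_away hp.pos f _⟩

/-- a Noetherian Jacobson ring of characteristic `p` is semi F-regular if and
only if it is weakly F-regular. -/
theorem semiFRegular_iff_weaklyFRegular_of_jacobson (p : ℕ) (hp : p.Prime)
    (R : Type*) [CommRing R] [IsNoetherianRing R] [CharP R p] [IsJacobsonRing R] :
    SemiFRegular p R ↔ WeaklyFRegular p R :=
  semiFRegular_iff_weaklyFRegular_of_jacobson_general p hp R
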